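/- For the linear discrete equation t_{uv} = t_u + t_v - t + 1, the second characteristic operator vanishes: X_2 = 0, and X_1 = \sum_{j\ge 0} \partial/\partial t_j (all coefficients equal 1); hence the characteristic algebra is one-dimensional. -/
import Mathlib


/-- Partial derivative with respect to the variable `t_i`. -/
noncomputable def pd (i : ℕ) (F : (ℕ → ℝ) → ℝ) (t : ℕ → ℝ) : ℝ :=
  deriv (fun s => F (Function.update t i s)) (t i)

/-- `f(t, t_u, t_v) = t_u + t_v - t + 1`. -/
def fL (a b c : ℝ) : ℝ := b + c - a + 1

/-- The iterated shifts `fⱼ = Dʲ f`, as functions of `t₀, t₁, …` and `t_v`. -/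
def fj : ℕ → (ℕ → ℝ) → ℝ → ℝ
  | 0 => fun t tv => fL (t 0) (t 1) tv
  | j + 1 => fun t tv => fL (t (j+1)) (t (j+2)) (fj j t tv)

/-- Closed form for the iterated shifts. -/
lemma fj_eq (j : ℕ) (t : ℕ → ℝ) (tv : ℝ) :
    fj j t tv = tv + t (j+1) - t 0 + (j+1) := by
  induction j with
  | zero => simp [fj, fL]; ring
  | succ j ih => simp [fj, fL, ih]; ring

/-- The partial derivatives of `fⱼ`: `-1` at `i = 0`, `1` at `i = j+1`, else `0`. -/
lemma pd_fj (j i : ℕ) (t : ℕ → ℝ) (tv : ℝ) :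
    pd i (fun s => fj j s tv) t =
      (if i = 0 then (-1:ℝ) else 0) + (if i = j+1 then 1 else 0) := by
  unfold pd
  simp only [fj_eq]
  rcases eq_or_ne i 0 with rfl | h0
  · have : (fun s => tv + Function.update t 0 s (j+1) - Function.update t 0 s 0 + ((j:ℝ)+1))
        = fun s => (tv + t (j+1) + ((j:ℝ)+1)) - s := by
      funext s
      rw [Function.update_self, Function.update_of_ne (by omega)]
      ring
    rw [this, deriv_const_sub]
    simp
  rcases eq_or_ne i (j+1) with rfl | h1
  · have : (fun s => tv + Function.update t (j+1) s (j+1) - Function.update t (j+1) s 0 + ((j:ℝ)+1))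
        = fun s => s + (tv - t 0 + ((j:ℝ)+1)) := by
      funext s
      rw [Function.update_self, Function.update_of_ne (by omega)]
      ring
    rw [this, deriv_add_const]
    simp [h0]
  · have : (fun s => tv + Function.update t i s (j+1) - Function.update t i s 0 + ((j:ℝ)+1))
        = fun _ => tv + t (j+1) - t 0 + ((j:ℝ)+1) := by
      funext s
      rw [Function.update_of_ne (by omega), Function.update_of_ne (by omega)]
    rw [this, deriv_const]
    simp [h0, h1]

/-- For the linear equation `t_{uv} = t_u + t_v - t + 1`: all coefficients of
`X₁` equal `1` (so `X₁ = Σ ∂/∂tⱼ`), and `X₁(fⱼ) = 0` for every `j`, so that the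
coefficients `D̄⁻¹(X₁(fⱼ))` of `X₂` all vanish, `X₂ ≡ 0`; hence the
characteristic algebra is one-dimensional. -/
theorem stmt13 (x : ℕ → ℝ)
    (hx0 : x 0 = 1)
    (hx1 : x 1 = deriv (fun c => fL 0 0 c) 0)      -- `x₁ = D̄⁻¹(∂f/∂t_v) = 1`
    (hxrec : ∀ j, x (j+1) = x j * x 1) :
    (∀ j, x j = 1) ∧
    (∀ (j : ℕ) (t : ℕ → ℝ) (tv : ℝ),
      ∑ i ∈ Finset.range (j+2), x i * pd i (fun s => fj j s tv) t = 0) := by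
  have hx1' : x 1 = 1 := by
    rw [hx1]
    have : (fun c : ℝ => fL 0 0 c) = fun c => c + 1 := by funext c; simp [fL]
    rw [this, deriv_add_const]; simp
  have hall : ∀ j, x j = 1 := by
    intro j
    induction j with
    | zero => exact hx0
    | succ j ih => rw [hxrec, ih, hx1']; ring
  refine ⟨hall, fun j t tv => ?_⟩
  have key : ∀ i ∈ Finset.range (j+2),
      x i * pd i (fun s => fj j s tv) t =
        (if i = 0 then (-1:ℝ) else 0) + (if i = j+1 then 1 else 0) := by
    intro i _
    rw [hall i, one_mul, pd_fj]
  rw [Finset.sum_congr rfl key, Finset.sum_add_distrib]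
  rw [Finset.sum_ite_eq' (Finset.range (j+2)) 0 (fun _ => (-1:ℝ)),
      Finset.sum_ite_eq' (Finset.range (j+2)) (j+1) (fun _ => (1:ℝ))]
  simp
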